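/- For every single-qubit Pauli matrix P₁ ∈ {X, Y, Z}, the single-qubit trap with a state-preparation Z-error satisfies (1/2) ∑_{t ∈ {0,1}} (1/2) ∑_{V ∈ {H,S}} |⟨+| H^t · V† · P₁ · V · H^t · Z |+⟩|² ≤ 3/4, where ⟨+| M |+⟩ denotes (conjugate-transpose of |+⟩) · M · |+⟩ for a 2 × 2 matrix M. (Inequality (multi1) of the paper: two-band errors of class 1 on one qubit are detected with probability at least 1/4.) -/

import Mathlib

open Matrix

/-- The Pauli matrix `X`. -/
noncomputable def Xm : Matrix (Fin 2) (Fin 2) ℂ := !![0, 1; 1, 0]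

/-- The Pauli matrix `Y`. -/
noncomputable def Ym : Matrix (Fin 2) (Fin 2) ℂ := !![0, -Complex.I; Complex.I, 0]

/-- The Pauli matrix `Z`. -/
noncomputable def Zm : Matrix (Fin 2) (Fin 2) ℂ := !![1, 0; 0, -1]

/-- The Hadamard matrix `H = (1/√2)!![1,1;1,-1]`. -/
noncomputable def Hm : Matrix (Fin 2) (Fin 2) ℂ :=
  (1 / ((Real.sqrt 2 : ℝ) : ℂ)) • !![1, 1; 1, -1]

/-- The phase matrix `S = diag(1, i)`. -/
noncomputable def Sm : Matrix (Fin 2) (Fin 2) ℂ := !![1, 0; 0, Complex.I]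

/-- The single-qubit state `|+⟩ = (1/√2)(1,1)`. -/
noncomputable def plus1 : Fin 2 → ℂ := fun _ => 1 / ((Real.sqrt 2 : ℝ) : ℂ)

/-- The matrix element `⟨+| M |+⟩` for a 2 × 2 matrix `M`. -/
noncomputable def plusBraket1 (M : Matrix (Fin 2) (Fin 2) ℂ) : ℂ :=
  ∑ x, ∑ y, star (plus1 x) * M x y * plus1 y

/-!
Since `Z|+⟩ = |−⟩`, each term is `|⟨+| Q |−⟩|²` with `Q = H^t V† P₁ V H^t`. Conjugation by `H` and
by `S` permutes the Pauli matrices up to sign (`H : X ↔ Z, Y ↦ −Y`; `S : X ↦ −Y, Y ↦ X, Z ↦ Z`), so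
`Q` is a signed Pauli matrix, and `|⟨+| Q |−⟩|²` is `0` for `Q = ±X` and `1` for `±Y, ±Z`. For every
`P₁` at least one of the four pairs `(t, V)` yields `±X`, whence the average is at most `3/4`.
-/

lemma mul_mul_mul_mul_eq_mul_mul {α : Type*} [Semigroup α] (a b p c d : α) :
    a * b * p * c * d = a * (b * p * c) * d := by
  simp only [mul_assoc]

lemma one_div_sqrt_two_mul_self :
    1 / ((Real.sqrt 2 : ℝ) : ℂ) * (1 / ((Real.sqrt 2 : ℝ) : ℂ)) = 2⁻¹ := by
  rw [div_mul_div_comm, one_mul, ← Complex.ofReal_mul, Real.mul_self_sqrt zero_le_two]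
  norm_num

lemma Hm_conjTranspose : Hmᴴ = Hm := by
  ext i j; fin_cases i <;> fin_cases j <;> simp [Hm]

lemma Hm_mul_mul_Hm (A : Matrix (Fin 2) (Fin 2) ℂ) :
    Hm * A * Hm = (2⁻¹ : ℂ) • (!![1, 1; 1, -1] * A * !![1, 1; 1, -1]) := by
  rw [Hm, Matrix.smul_mul, Matrix.smul_mul, Matrix.mul_smul, smul_smul, one_div_sqrt_two_mul_self]

lemma Hm_mul_Xm_mul_Hm : Hm * Xm * Hm = Zm := by
  rw [Hm_mul_mul_Hm]; ext i j; fin_cases i <;> fin_cases j <;> simp [Xm, Zm] <;> norm_num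

lemma Hm_mul_Ym_mul_Hm : Hm * Ym * Hm = -Ym := by
  rw [Hm_mul_mul_Hm]; ext i j; fin_cases i <;> fin_cases j <;> simp [Ym] <;> ring

lemma Hm_mul_Zm_mul_Hm : Hm * Zm * Hm = Xm := by
  rw [Hm_mul_mul_Hm]; ext i j; fin_cases i <;> fin_cases j <;> simp [Xm, Zm] <;> norm_num

lemma Sm_conjTranspose : Smᴴ = !![1, 0; 0, -Complex.I] := by
  ext i j; fin_cases i <;> fin_cases j <;> simp [Sm]

lemma Sm_conjTranspose_mul_Xm_mul_Sm : Smᴴ * Xm * Sm = -Ym := by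
  rw [Sm_conjTranspose]; ext i j; fin_cases i <;> fin_cases j <;> simp [Sm, Xm, Ym]

lemma Sm_conjTranspose_mul_Ym_mul_Sm : Smᴴ * Ym * Sm = Xm := by
  rw [Sm_conjTranspose]; ext i j; fin_cases i <;> fin_cases j <;> simp [Sm, Xm, Ym]

lemma Sm_conjTranspose_mul_Zm_mul_Sm : Smᴴ * Zm * Sm = Zm := by
  rw [Sm_conjTranspose]; ext i j; fin_cases i <;> fin_cases j <;> simp [Sm, Zm]

lemma plusBraket1_eq (M : Matrix (Fin 2) (Fin 2) ℂ) :
    plusBraket1 M = 2⁻¹ * (M 0 0 + M 0 1 + M 1 0 + M 1 1) := by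
  simp only [plusBraket1, plus1, Fin.sum_univ_two, star_div₀, star_one, Complex.star_def,
    Complex.conj_ofReal]
  linear_combination (M 0 0 + M 0 1 + M 1 0 + M 1 1) * one_div_sqrt_two_mul_self

lemma plusBraket1_neg (M : Matrix (Fin 2) (Fin 2) ℂ) : plusBraket1 (-M) = -plusBraket1 M := by
  rw [plusBraket1_eq, plusBraket1_eq]; simp only [Matrix.neg_apply]; ring

lemma plusBraket1_Xm_mul_Zm : plusBraket1 (Xm * Zm) = 0 := by
  simp [plusBraket1_eq, Xm, Zm]

lemma plusBraket1_Ym_mul_Zm : plusBraket1 (Ym * Zm) = Complex.I := by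
  simp [plusBraket1_eq, Ym, Zm]; ring

lemma plusBraket1_Zm_mul_Zm : plusBraket1 (Zm * Zm) = 1 := by
  norm_num [plusBraket1_eq, Zm]

/-- **Inequality (multi1).** For every single-qubit Pauli error `P₁ ∈ {X, Y, Z}`, the
single-qubit trap with a state-preparation Z-error satisfies
`(1/2) ∑_{t∈{0,1}} (1/2) ∑_{V∈{H,S}} |⟨+| H^t V† P₁ V H^t Z |+⟩|² ≤ 3/4`. -/
theorem class1_single_qubit_detection (P₁ : Matrix (Fin 2) (Fin 2) ℂ)
    (hP : P₁ = Xm ∨ P₁ = Ym ∨ P₁ = Zm) :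
    (1 / 2 : ℝ) * ∑ t : Fin 2, (1 / 2) * ∑ v : Fin 2,
        ‖plusBraket1
          (Hm ^ (t : ℕ) * (![Hm, Sm] v)ᴴ * P₁ * ![Hm, Sm] v * Hm ^ (t : ℕ) * Zm)‖ ^ 2
      ≤ 3 / 4 := by
  simp only [mul_mul_mul_mul_eq_mul_mul, Fin.sum_univ_two]
  rcases hP with rfl | rfl | rfl <;>
    norm_num [Hm_conjTranspose, Hm_mul_Xm_mul_Hm, Hm_mul_Ym_mul_Hm, Hm_mul_Zm_mul_Hm,
      Sm_conjTranspose_mul_Xm_mul_Sm, Sm_conjTranspose_mul_Ym_mul_Sm,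
      Sm_conjTranspose_mul_Zm_mul_Sm, plusBraket1_neg, plusBraket1_Xm_mul_Zm,
      plusBraket1_Ym_mul_Zm, plusBraket1_Zm_mul_Zm]
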